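/- Let g, h: ℝ^p → ℝ ∪ {∞} be proper, convex and lsc, and let Γ, Λ be diagonal positive definite p×p matrices with 0 ≺ Λ ≺ 2I. Then one iteration u = prox_h^Γ(s), v = prox_g^Γ(s), s⁺ = s + Λ(v − u) satisfies φ_Γ(s⁺) ≤ φ_Γ(s) − (1/2)‖u − v‖²_{(2I−Λ)Γ^{-1}Λ}, where φ_Γ := g^Γ − h^Γ and ‖x‖²_M = ⟨x, Mx⟩. -/

import Mathlib

open scoped InnerProductSpace
noncomputable section

/-- `ℝ^p` as a Euclidean space. -/
abbrev Euc (p : ℕ) := EuclideanSpace ℝ (Fin p)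

variable {p : ℕ}

/-- `f : ℝ^p → ℝ ∪ {∞}` (modelled with `EReal` values never equal to `-∞`) is proper. -/
def ProperFun (f : Euc p → EReal) : Prop :=
  (∀ x, f x ≠ ⊥) ∧ (∃ x, f x ≠ ⊤)

/-- Convexity for extended-real-valued functions. -/
def ConvexFun (f : Euc p → EReal) : Prop :=
  ∀ x y : Euc p, ∀ t : ℝ, 0 ≤ t → t ≤ 1 →
    f (t • x + (1 - t) • y) ≤ (t : EReal) * f x + ((1 - t : ℝ) : EReal) * f y

/-- A matrix acting on `ℝ^p`. -/
def mApply (M : Matrix (Fin p) (Fin p) ℝ) (x : Euc p) : Euc p :=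
  Matrix.toEuclideanLin M x

/-- The quadratic form `‖x‖²_M = ⟨x, Mx⟩`. -/
def qf (M : Matrix (Fin p) (Fin p) ℝ) (x : Euc p) : ℝ := ⟪x, mApply M x⟫_ℝ

/-- `u` minimizes `w ↦ f(w) + (1/2)‖w − x‖²_{Γ⁻¹}`. -/
def ProxObjMinM (f : Euc p → EReal) (Γ : Matrix (Fin p) (Fin p) ℝ) (x u : Euc p) : Prop :=
  ∀ w, f u + ((1/2 * qf Γ⁻¹ (u - x) : ℝ) : EReal) ≤ f w + ((1/2 * qf Γ⁻¹ (w - x) : ℝ) : EReal)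

/-- `u = prox_f^Γ(x)`: `u` is the unique minimizer of `w ↦ f(w) + (1/2)‖w − x‖²_{Γ⁻¹}`. -/
def IsProxOfM (f : Euc p → EReal) (Γ : Matrix (Fin p) (Fin p) ℝ) (x u : Euc p) : Prop :=
  ProxObjMinM f Γ x u ∧ ∀ w, ProxObjMinM f Γ x w → w = u

/-- The matrix-stepsize Moreau envelope `f^Γ(x) = inf_w { f(w) + (1/2)‖w − x‖²_{Γ⁻¹} }`. -/
def moreauM (f : Euc p → EReal) (Γ : Matrix (Fin p) (Fin p) ℝ) (x : Euc p) : EReal :=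
  ⨅ w : Euc p, f w + ((1/2 * qf Γ⁻¹ (w - x) : ℝ) : EReal)

/-- The real-valued matrix-stepsize Moreau envelope. -/
def moreauMR (f : Euc p → EReal) (Γ : Matrix (Fin p) (Fin p) ℝ) (x : Euc p) : ℝ :=
  (moreauM f Γ x).toReal

/-- The matrix-stepsize DC envelope `φ_Γ = g^Γ − h^Γ`. -/
def dceM (g h : Euc p → EReal) (Γ : Matrix (Fin p) (Fin p) ℝ) (s : Euc p) : ℝ :=
  moreauMR g Γ s - moreauMR h Γ s

/-!
Write `u = prox_h^Γ s` and `v = prox_g^Γ s`. Comparing `u` with points on segments towards any `w`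
shows that `Γ⁻¹ (s - u)` is a subgradient of `h` at `u`, which yields the tangent lower bound
`h^Γ z ≥ h^Γ s - ⟪u - s, Γ⁻¹ (z - s)⟫`; in the other direction `g^Γ z ≤ g v + ½‖v - z‖²_{Γ⁻¹}`
by testing `v` in the infimum. At `z = s⁺ = s + Λ (v - u)` the symmetry of `Γ⁻¹` and `Λ` makes
the two error terms combine into exactly `-½‖u - v‖²_{(2I - Λ) Γ⁻¹ Λ}`.
-/

open Filter Topology

section QuadraticForm

lemma mApply_add (M : Matrix (Fin p) (Fin p) ℝ) (x y : Euc p) :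
    mApply M (x + y) = mApply M x + mApply M y :=
  map_add _ x y

lemma mApply_sub (M : Matrix (Fin p) (Fin p) ℝ) (x y : Euc p) :
    mApply M (x - y) = mApply M x - mApply M y :=
  map_sub _ x y

lemma mApply_smul (M : Matrix (Fin p) (Fin p) ℝ) (c : ℝ) (x : Euc p) :
    mApply M (c • x) = c • mApply M x :=
  map_smul _ c x

lemma mApply_neg (M : Matrix (Fin p) (Fin p) ℝ) (x : Euc p) : mApply M (-x) = -mApply M x :=
  map_neg _ x

lemma mApply_mul (A B : Matrix (Fin p) (Fin p) ℝ) (x : Euc p) :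
    mApply (A * B) x = mApply A (mApply B x) := by
  simp [mApply]

lemma mApply_two_smul_one_sub (A : Matrix (Fin p) (Fin p) ℝ) (x : Euc p) :
    mApply (2 • 1 - A) x = (2 : ℝ) • x - mApply A x := by
  simp [mApply, two_smul]

variable {M : Matrix (Fin p) (Fin p) ℝ}

lemma Matrix.IsHermitian.inner_mApply_left (hM : M.IsHermitian) (x y : Euc p) :
    ⟪mApply M x, y⟫_ℝ = ⟪x, mApply M y⟫_ℝ :=
  Matrix.isSymmetric_toEuclideanLin_iff.mpr hM x y

lemma qf_add (hM : M.IsHermitian) (x y : Euc p) :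
    qf M (x + y) = qf M x + 2 * ⟪x, mApply M y⟫_ℝ + qf M y := by
  simp only [qf, mApply_add, inner_add_left, inner_add_right]
  rw [real_inner_comm (mApply M x) y, hM.inner_mApply_left]
  ring

lemma qf_smul (c : ℝ) (x : Euc p) : qf M (c • x) = c ^ 2 * qf M x := by
  simp only [qf, mApply_smul, real_inner_smul_left, real_inner_smul_right]
  ring

lemma qf_neg (x : Euc p) : qf M (-x) = qf M x := by
  simpa using qf_smul (M := M) (-1) x

lemma qf_sub (hM : M.IsHermitian) (x y : Euc p) :
    qf M (x - y) = qf M x - 2 * ⟪x, mApply M y⟫_ℝ + qf M y := by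
  rw [sub_eq_add_neg, qf_add hM, qf_neg, mApply_neg, inner_neg_right]
  ring

lemma qf_nonneg (hM : M.PosSemidef) (x : Euc p) : 0 ≤ qf M x := by
  rw [qf, mApply, real_inner_comm]
  exact (Matrix.isPositive_toEuclideanLin_iff.mpr hM).inner_nonneg_left x

end QuadraticForm

lemma le_of_forall_Ioc_le_add_mul {a b c : ℝ} (h : ∀ t ∈ Set.Ioc (0 : ℝ) 1, a ≤ b + t * c) :
    a ≤ b := by
  have hlim : Tendsto (fun t : ℝ => b + t * c) (𝓝[>] 0) (𝓝 b) := by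
    have : Continuous fun t : ℝ => b + t * c := by fun_prop
    simpa using this.continuousWithinAt.tendsto (x := 0) (s := Set.Ioi 0)
  exact ge_of_tendsto hlim (Filter.mem_of_superset (Ioc_mem_nhdsGT one_pos) h)

lemma moreauM_le_coe_add (f : Euc p → EReal) (Γ : Matrix (Fin p) (Fin p) ℝ) (u z : Euc p) :
    moreauM f Γ z ≤ f u + ((1/2 * qf Γ⁻¹ (u - z) : ℝ) : EReal) :=
  iInf_le (fun w => f w + ((1/2 * qf Γ⁻¹ (w - z) : ℝ) : EReal)) u

namespace ProxObjMinM

variable {f : Euc p → EReal} {Γ : Matrix (Fin p) (Fin p) ℝ} {s u : Euc p} {r : ℝ}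

lemma exists_coe (hf : ProperFun f) (hu : ProxObjMinM f Γ s u) : ∃ r : ℝ, f u = r := by
  obtain ⟨x, hx⟩ := hf.2
  have hfu : f u ≠ ⊤ := by
    intro htop
    have := hu x
    rw [htop, EReal.top_add_coe, top_le_iff, ← EReal.coe_toReal hx (hf.1 x),
      ← EReal.coe_add] at this
    exact EReal.coe_ne_top _ this
  exact ⟨(f u).toReal, (EReal.coe_toReal hfu (hf.1 u)).symm⟩

lemma ne_bot (hu : ProxObjMinM f Γ s u) (hr : f u = r) (w : Euc p) : f w ≠ ⊥ := by
  intro hbot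
  have := hu w
  rw [hr, hbot, EReal.bot_add, le_bot_iff, ← EReal.coe_add] at this
  exact EReal.coe_ne_bot _ this

/-- Optimality of the prox point: `Γ⁻¹ (s - u)` is a subgradient of `f` at `u`. -/
lemma coe_add_inner_le (hu : ProxObjMinM f Γ s u) (hfc : ConvexFun f) (hΓ : Γ⁻¹.IsHermitian)
    (hr : f u = r) (w : Euc p) :
    ((r + ⟪s - u, mApply Γ⁻¹ (w - u)⟫_ℝ : ℝ) : EReal) ≤ f w := by
  by_cases hw : f w = ⊤
  · exact hw ▸ le_top
  obtain ⟨a, ha⟩ : ∃ a : ℝ, f w = a := ⟨_, (EReal.coe_toReal hw (hu.ne_bot hr w)).symm⟩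
  rw [ha, EReal.coe_le_coe_iff]
  -- compare `u` with `u + t • (w - u)` and let `t → 0⁺`
  refine le_of_forall_Ioc_le_add_mul (c := 1/2 * qf Γ⁻¹ (w - u)) fun t ⟨ht0, ht1⟩ => ?_
  have hconv := hfc w u t ht0.le ht1
  rw [hr, ha, ← EReal.coe_mul, ← EReal.coe_mul, ← EReal.coe_add] at hconv
  have hmin := (hu (t • w + (1 - t) • u)).trans (add_le_add_left hconv _)
  rw [hr, ← EReal.coe_add, ← EReal.coe_add, EReal.coe_le_coe_iff] at hmin
  have hpt : t • w + (1 - t) • u - s = (u - s) + t • (w - u) := by module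
  rw [hpt, qf_add hΓ, qf_smul, mApply_smul, real_inner_smul_right, ← neg_sub s u,
    inner_neg_left] at hmin
  have hscaled : t * (r + ⟪s - u, mApply Γ⁻¹ (w - u)⟫_ℝ) ≤
      t * (a + t * (1/2 * qf Γ⁻¹ (w - u))) := by linarith
  exact le_of_mul_le_mul_left hscaled ht0

lemma coe_le_moreauM (hu : ProxObjMinM f Γ s u) (hfc : ConvexFun f) (hΓ : Γ⁻¹.PosSemidef)
    (hr : f u = r) (z : Euc p) :
    ((r + 1/2 * qf Γ⁻¹ (u - s) - ⟪u - s, mApply Γ⁻¹ (z - s)⟫_ℝ : ℝ) : EReal) ≤ moreauM f Γ z := by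
  refine le_iInf fun w => le_trans ?_ (add_le_add_left (hu.coe_add_inner_le hfc hΓ.1 hr w) _)
  rw [← EReal.coe_add, EReal.coe_le_coe_iff]
  have hwz : w - z = (u - s) + ((w - u) - (z - s)) := by abel
  have hsu : s - u = -(u - s) := (neg_sub u s).symm
  rw [hwz, qf_add hΓ.1, hsu, inner_neg_left, mApply_sub _ (w - u), inner_sub_right]
  -- the gap is `½ ‖(w - u) - (z - s)‖²_{Γ⁻¹}`
  linarith [qf_nonneg hΓ ((w - u) - (z - s))]

lemma coe_moreauMR (hu : ProxObjMinM f Γ s u) (hfc : ConvexFun f) (hΓ : Γ⁻¹.PosSemidef)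
    (hr : f u = r) (z : Euc p) : (moreauMR f Γ z : EReal) = moreauM f Γ z := by
  refine EReal.coe_toReal (ne_top_of_le_ne_top ?_ (moreauM_le_coe_add f Γ u z)) ?_
  · rw [hr, ← EReal.coe_add]
    exact EReal.coe_ne_top _
  · exact ne_bot_of_le_ne_bot (EReal.coe_ne_bot _) (hu.coe_le_moreauM hfc hΓ hr z)

lemma le_moreauMR (hu : ProxObjMinM f Γ s u) (hfc : ConvexFun f) (hΓ : Γ⁻¹.PosSemidef)
    (hr : f u = r) (z : Euc p) :
    r + 1/2 * qf Γ⁻¹ (u - s) - ⟪u - s, mApply Γ⁻¹ (z - s)⟫_ℝ ≤ moreauMR f Γ z := by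
  rw [← EReal.coe_le_coe_iff, hu.coe_moreauMR hfc hΓ hr]
  exact hu.coe_le_moreauM hfc hΓ hr z

lemma moreauMR_le (hu : ProxObjMinM f Γ s u) (hfc : ConvexFun f) (hΓ : Γ⁻¹.PosSemidef)
    (hr : f u = r) (z : Euc p) : moreauMR f Γ z ≤ r + 1/2 * qf Γ⁻¹ (u - z) := by
  rw [← EReal.coe_le_coe_iff, hu.coe_moreauMR hfc hΓ hr, EReal.coe_add, ← hr]
  exact moreauM_le_coe_add f Γ u z

lemma moreauMR_self (hu : ProxObjMinM f Γ s u) (hfc : ConvexFun f) (hΓ : Γ⁻¹.PosSemidef)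
    (hr : f u = r) : moreauMR f Γ s = r + 1/2 * qf Γ⁻¹ (u - s) :=
  (hu.moreauMR_le hfc hΓ hr s).antisymm (by simpa [mApply] using hu.le_moreauMR hfc hΓ hr s)

end ProxObjMinM

lemma half_qf_sub_add_inner {Q Λ : Matrix (Fin p) (Fin p) ℝ} (hQ : Q.IsHermitian)
    (hΛ : Λ.IsHermitian) (s u v : Euc p) :
    1/2 * qf Q (v - (s + mApply Λ (v - u))) + ⟪u - s, mApply Q (mApply Λ (v - u))⟫_ℝ =
      1/2 * qf Q (v - s) - 1/2 * qf ((2 • 1 - Λ) * Q * Λ) (u - v) := by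
  have hT (d : Euc p) : qf ((2 • 1 - Λ) * Q * Λ) d =
      2 * ⟪d, mApply Q (mApply Λ d)⟫_ℝ - ⟪mApply Λ d, mApply Q (mApply Λ d)⟫_ℝ := by
    rw [qf, mApply_mul, mApply_mul, mApply_two_smul_one_sub, inner_sub_right,
      real_inner_smul_right, ← hΛ.inner_mApply_left]
  rw [show v - (s + mApply Λ (v - u)) = (v - s) - mApply Λ (v - u) by abel,
    show u - s = (v - s) - (v - u) by abel, ← neg_sub v u, qf_neg, qf_sub hQ, hT]
  simp only [qf, inner_sub_left]
  ring

theorem statement17_general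
    (g h : Euc p → EReal)
    (hg_proper : ProperFun g) (hg_convex : ConvexFun g)
    (hh_proper : ProperFun h) (hh_convex : ConvexFun h)
    (Γ Λ : Matrix (Fin p) (Fin p) ℝ)
    (hΓpos : Γ.PosDef)
    (hΛpos : Λ.PosDef)
    (s u v splus : Euc p)
    (hu : IsProxOfM h Γ s u) (hv : IsProxOfM g Γ s v)
    (hsplus : splus = s + mApply Λ (v - u)) :
    dceM g h Γ splus ≤
      dceM g h Γ s -
        1/2 * qf ((2 • (1 : Matrix (Fin p) (Fin p) ℝ) - Λ) * Γ⁻¹ * Λ) (u - v) := by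
  subst hsplus
  have hΓinv : Γ⁻¹.PosSemidef := hΓpos.inv.posSemidef
  obtain ⟨ru, hru⟩ := hu.1.exists_coe hh_proper
  obtain ⟨rv, hrv⟩ := hv.1.exists_coe hg_proper
  have hg_upper := hv.1.moreauMR_le hg_convex hΓinv hrv (s + mApply Λ (v - u))
  have hh_lower := hu.1.le_moreauMR hh_convex hΓinv hru (s + mApply Λ (v - u))
  rw [add_sub_cancel_left] at hh_lower
  have hidentity := half_qf_sub_add_inner hΓinv.1 hΛpos.isHermitian s u v
  rw [dceM, dceM, hv.1.moreauMR_self hg_convex hΓinv hrv, hu.1.moreauMR_self hh_convex hΓinv hru]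
  linarith

/-- with diagonal positive definite `Γ` and diagonal `0 ≺ Λ ≺ 2I`, one iteration
`u = prox_h^Γ(s)`, `v = prox_g^Γ(s)`, `s⁺ = s + Λ(v − u)` satisfies
`φ_Γ(s⁺) ≤ φ_Γ(s) − (1/2)‖u − v‖²_{(2I−Λ)Γ⁻¹Λ}`. -/
theorem statement17
    (g h : Euc p → EReal)
    (hg_proper : ProperFun g) (hg_convex : ConvexFun g) (hg_lsc : LowerSemicontinuous g)
    (hh_proper : ProperFun h) (hh_convex : ConvexFun h) (hh_lsc : LowerSemicontinuous h)
    (Γ Λ : Matrix (Fin p) (Fin p) ℝ)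
    (hΓdiag : Γ.IsDiag) (hΓpos : Γ.PosDef)
    (hΛdiag : Λ.IsDiag) (hΛpos : Λ.PosDef)
    (hΛlt2 : (2 • (1 : Matrix (Fin p) (Fin p) ℝ) - Λ).PosDef)
    (s u v splus : Euc p)
    (hu : IsProxOfM h Γ s u) (hv : IsProxOfM g Γ s v)
    (hsplus : splus = s + mApply Λ (v - u)) :
    dceM g h Γ splus ≤
      dceM g h Γ s -
        1/2 * qf ((2 • (1 : Matrix (Fin p) (Fin p) ℝ) - Λ) * Γ⁻¹ * Λ) (u - v) :=
  statement17_general g h hg_proper hg_convex hh_proper hh_convex Γ Λ hΓpos hΛpos s u v splus hu hv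
    hsplus
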